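/- Let c_v > 0, ϱ₋, ϱ₊, p₋, p₊ > 0 and v₋, v₊ ∈ ℝ, and assume that either p₋ ≤ p₊ and v₊ − v₋ < −(p₊ − p₋)·√(2c_v/(ϱ₋(p₋ + (2c_v+1)p₊))), or p₊ ≤ p₋ and v₊ − v₋ < −(p₋ − p₊)·√(2c_v/(ϱ₊(p₊ + (2c_v+1)p₋))). Then there exists a unique p_M > 0 satisfying −√(2c_v)·[(p_M − p₋)/√(ϱ₋(p₋ + (2c_v+1)p_M)) + (p_M − p₊)/√(ϱ₊(p₊ + (2c_v+1)p_M))] = v₊ − v₋. Moreover p_M > max{p₋, p₊}, and the quantities ϱ_{M−} := ϱ₋(p₋ + (2c_v+1)p_M)/(p_M + (2c_v+1)p₋) and ϱ_{M+} := ϱ₊(p₊ + (2c_v+1)p_M)/(p_M + (2c_v+1)p₊) satisfy ϱ_{M−} > ϱ₋ and ϱ_{M+} > ϱ₊. -/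
import Mathlib


/-- Strict monotonicity of a single shock-curve branch. -/
lemma riemann_gstep (ϱ p₀ k a b : ℝ) (hϱ : 0 < ϱ) (hp : 0 < p₀) (hk : 0 < k)
    (ha : 0 ≤ a) (hab : a < b) :
    (a - p₀) / Real.sqrt (ϱ * (p₀ + k * a)) <
    (b - p₀) / Real.sqrt (ϱ * (p₀ + k * b)) := by
  have hDa : 0 < ϱ * (p₀ + k * a) := mul_pos hϱ (by nlinarith [mul_nonneg hk.le ha])
  have hDb : 0 < ϱ * (p₀ + k * b) := mul_pos hϱ (by nlinarith [mul_nonneg hk.le ha])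
  have hsa : 0 < Real.sqrt (ϱ * (p₀ + k * a)) := Real.sqrt_pos.mpr hDa
  have hsb : 0 < Real.sqrt (ϱ * (p₀ + k * b)) := Real.sqrt_pos.mpr hDb
  have hab' : Real.sqrt (ϱ * (p₀ + k * a)) < Real.sqrt (ϱ * (p₀ + k * b)) :=
    Real.sqrt_lt_sqrt hDa.le (by nlinarith [mul_pos hϱ (mul_pos hk (sub_pos.mpr hab))])
  rcases le_or_gt a p₀ with h | h
  · have h1 : (a - p₀) / Real.sqrt (ϱ * (p₀ + k * a)) ≤
        (a - p₀) / Real.sqrt (ϱ * (p₀ + k * b)) := by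
      rw [div_le_div_iff₀ hsa hsb]
      nlinarith [mul_nonneg (sub_nonneg.mpr h) (sub_nonneg.mpr hab'.le)]
    have h2 : (a - p₀) / Real.sqrt (ϱ * (p₀ + k * b)) <
        (b - p₀) / Real.sqrt (ϱ * (p₀ + k * b)) := by
      rw [div_lt_div_iff₀ hsb hsb]
      nlinarith [mul_pos hsb (sub_pos.mpr hab)]
    linarith
  · rw [div_lt_div_iff₀ hsa hsb]
    have hb : p₀ < b := lt_trans h hab
    have key : ((a - p₀) * Real.sqrt (ϱ * (p₀ + k * b)))^2 <
        ((b - p₀) * Real.sqrt (ϱ * (p₀ + k * a)))^2 := by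
      rw [mul_pow, mul_pow, Real.sq_sqrt hDa.le, Real.sq_sqrt hDb.le]
      nlinarith [mul_pos (mul_pos hϱ hp) (mul_pos (sub_pos.mpr hab)
          (show 0 < a + b - 2*p₀ by linarith)),
        mul_pos (mul_pos (mul_pos hϱ hk) hp) (mul_pos (sub_pos.mpr hab)
          (show 0 < a + b - 2*p₀ by linarith)),
        mul_pos (mul_pos (mul_pos hϱ hk) (mul_pos (sub_pos.mpr h) (sub_pos.mpr hb)))
          (sub_pos.mpr hab)]
    exact lt_of_pow_lt_pow_left₀ 2 (mul_nonneg (by linarith) hsa.le) key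

noncomputable def rtsF (cv ϱm ϱp pm pp p : ℝ) : ℝ :=
  -Real.sqrt (2 * cv) *
    ((p - pm) / Real.sqrt (ϱm * (pm + (2 * cv + 1) * p)) +
     (p - pp) / Real.sqrt (ϱp * (pp + (2 * cv + 1) * p)))

lemma rtsF_anti (cv ϱm ϱp pm pp : ℝ) (hcv : 0 < cv) (hϱm : 0 < ϱm) (hϱp : 0 < ϱp)
    (hpm : 0 < pm) (hpp : 0 < pp) {a b : ℝ} (ha : 0 ≤ a) (hab : a < b) :
    rtsF cv ϱm ϱp pm pp b < rtsF cv ϱm ϱp pm pp a := by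
  have hs : 0 < Real.sqrt (2 * cv) := Real.sqrt_pos.mpr (by linarith)
  have h1 := riemann_gstep ϱm pm (2*cv+1) a b hϱm hpm (by linarith) ha hab
  have h2 := riemann_gstep ϱp pp (2*cv+1) a b hϱp hpp (by linarith) ha hab
  unfold rtsF
  nlinarith [mul_lt_mul_of_pos_left (add_lt_add h1 h2) hs]

lemma rtsF_contOn (cv ϱm ϱp pm pp : ℝ) (hcv : 0 < cv) (hϱm : 0 < ϱm) (hϱp : 0 < ϱp)
    (hpm : 0 < pm) (hpp : 0 < pp) :
    ContinuousOn (rtsF cv ϱm ϱp pm pp) (Set.Ici 0) := by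
  apply ContinuousOn.mul continuousOn_const
  apply ContinuousOn.add
  · apply ContinuousOn.div (by fun_prop) (by fun_prop)
    intro x hx
    have hx0 : (0:ℝ) ≤ x := hx
    exact ne_of_gt (Real.sqrt_pos.mpr (mul_pos hϱm (by nlinarith)))
  · apply ContinuousOn.div (by fun_prop) (by fun_prop)
    intro x hx
    have hx0 : (0:ℝ) ≤ x := hx
    exact ne_of_gt (Real.sqrt_pos.mpr (mul_pos hϱp (by nlinarith)))

set_option maxHeartbeats 1600000 in
/-- **Proposition (two-shock Riemann problem: intermediate states).**
Under the two-shock condition on the Riemann data there is a unique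
intermediate pressure `p_M > 0` solving the shock-curve equation; moreover
`p_M > max{p₋, p₊}` and the intermediate densities `ϱ_{M−}`, `ϱ_{M+}` exceed the
initial ones. -/
theorem riemann_two_shocks_intermediate_states
    (cv ϱm ϱp pm pp vm vp : ℝ)
    (hcv : 0 < cv) (hϱm : 0 < ϱm) (hϱp : 0 < ϱp) (hpm : 0 < pm) (hpp : 0 < pp)
    (hcond :
      (pm ≤ pp ∧ vp - vm <
        -(pp - pm) * Real.sqrt (2 * cv / (ϱm * (pm + (2 * cv + 1) * pp)))) ∨
      (pp ≤ pm ∧ vp - vm <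
        -(pm - pp) * Real.sqrt (2 * cv / (ϱp * (pp + (2 * cv + 1) * pm))))) :
    (∃! pM : ℝ, 0 < pM ∧
      -Real.sqrt (2 * cv) *
          ((pM - pm) / Real.sqrt (ϱm * (pm + (2 * cv + 1) * pM)) +
           (pM - pp) / Real.sqrt (ϱp * (pp + (2 * cv + 1) * pM))) = vp - vm) ∧
    (∀ pM : ℝ,
      (0 < pM ∧
        -Real.sqrt (2 * cv) *
            ((pM - pm) / Real.sqrt (ϱm * (pm + (2 * cv + 1) * pM)) +
             (pM - pp) / Real.sqrt (ϱp * (pp + (2 * cv + 1) * pM))) = vp - vm) →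
      max pm pp < pM ∧
      ϱm < ϱm * (pm + (2 * cv + 1) * pM) / (pM + (2 * cv + 1) * pm) ∧
      ϱp < ϱp * (pp + (2 * cv + 1) * pM) / (pM + (2 * cv + 1) * pp)) := by
  have hs : 0 < Real.sqrt (2 * cv) := Real.sqrt_pos.mpr (by linarith)
  set m := max pm pp with hm
  have hm0 : 0 < m := lt_max_iff.mpr (Or.inl hpm)
  -- value of rtsF at the larger initial pressure
  have hfm : vp - vm < rtsF cv ϱm ϱp pm pp m := by
    rcases hcond with ⟨hle, hv⟩ | ⟨hle, hv⟩
    · have hmax : m = pp := max_eq_right hle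
      rw [hmax]
      have : rtsF cv ϱm ϱp pm pp pp
          = -(pp - pm) * Real.sqrt (2 * cv / (ϱm * (pm + (2 * cv + 1) * pp))) := by
        unfold rtsF
        rw [Real.sqrt_div (by linarith : (0:ℝ) ≤ 2 * cv), sub_self, zero_div, add_zero]
        ring
      rw [this]; exact hv
    · have hmax : m = pm := max_eq_left hle
      rw [hmax]
      have : rtsF cv ϱm ϱp pm pp pm
          = -(pm - pp) * Real.sqrt (2 * cv / (ϱp * (pp + (2 * cv + 1) * pm))) := by
        unfold rtsF
        rw [Real.sqrt_div (by linarith : (0:ℝ) ≤ 2 * cv), sub_self, zero_div, zero_add]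
        ring
      rw [this]; exact hv
  have hfm0 : rtsF cv ϱm ϱp pm pp m ≤ 0 := by
    unfold rtsF
    have h1 : 0 ≤ (m - pm) / Real.sqrt (ϱm * (pm + (2 * cv + 1) * m)) :=
      div_nonneg (sub_nonneg.mpr (le_max_left _ _)) (Real.sqrt_nonneg _)
    have h2 : 0 ≤ (m - pp) / Real.sqrt (ϱp * (pp + (2 * cv + 1) * m)) :=
      div_nonneg (sub_nonneg.mpr (le_max_right _ _)) (Real.sqrt_nonneg _)
    nlinarith
  have hΔ : vp - vm < 0 := lt_of_lt_of_le hfm hfm0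
  set C := (vm - vp) / Real.sqrt (2 * cv) with hCdef
  have hC0 : 0 < C := div_pos (by linarith) hs
  set B := ϱm * (pm + (2 * cv + 1)) with hBdef
  have hB : 0 < B := mul_pos hϱm (by linarith)
  have hBC : 0 ≤ 4 * B * C ^ 2 := by positivity
  set P := 1 + 2 * pm + pp + 4 * B * C ^ 2 with hPdef
  have hP1 : 1 ≤ P := by linarith
  have hPm : m < P := max_lt (by linarith) (by linarith)
  -- rtsF is below vp - vm at P
  have hfP : rtsF cv ϱm ϱp pm pp P ≤ vp - vm := by
    have hDP1 : 0 < ϱm * (pm + (2 * cv + 1) * P) := mul_pos hϱm (by nlinarith)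
    have hDP2 : 0 < ϱp * (pp + (2 * cv + 1) * P) := mul_pos hϱp (by nlinarith)
    have hsP1 : 0 < Real.sqrt (ϱm * (pm + (2 * cv + 1) * P)) := Real.sqrt_pos.mpr hDP1
    have hg2 : 0 ≤ (P - pp) / Real.sqrt (ϱp * (pp + (2 * cv + 1) * P)) :=
      div_nonneg (by linarith) (Real.sqrt_nonneg _)
    have hstep1 : ϱm * (pm + (2 * cv + 1) * P) ≤ B * P := by
      rw [hBdef]
      nlinarith [mul_nonneg (mul_pos hϱm hpm).le (show (0:ℝ) ≤ P - 1 by linarith)]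
    have hsqle : Real.sqrt (ϱm * (pm + (2 * cv + 1) * P)) ≤ Real.sqrt B * Real.sqrt P := by
      rw [← Real.sqrt_mul hB.le]
      exact Real.sqrt_le_sqrt hstep1
    have hBP : 0 < Real.sqrt B * Real.sqrt P :=
      mul_pos (Real.sqrt_pos.mpr hB) (Real.sqrt_pos.mpr (by linarith))
    have hg1a : (P / 2) / (Real.sqrt B * Real.sqrt P) ≤
        (P - pm) / Real.sqrt (ϱm * (pm + (2 * cv + 1) * P)) :=
      div_le_div₀ (by linarith) (by linarith) hsP1 hsqle
    have hsq4 : Real.sqrt (4 * B * C ^ 2) = 2 * Real.sqrt B * C := by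
      rw [show 4 * B * C ^ 2 = (2 * Real.sqrt B * C) ^ 2 by
        rw [mul_pow, mul_pow, Real.sq_sqrt hB.le]; ring]
      exact Real.sqrt_sq (by positivity)
    have hsqP : 2 * Real.sqrt B * C ≤ Real.sqrt P := by
      rw [← hsq4]
      exact Real.sqrt_le_sqrt (by linarith)
    have hCle : C ≤ (P / 2) / (Real.sqrt B * Real.sqrt P) := by
      rw [le_div_iff₀ hBP]
      have hPP : Real.sqrt P * Real.sqrt P = P := Real.mul_self_sqrt (by linarith)
      nlinarith [mul_le_mul_of_nonneg_left hsqP (Real.sqrt_nonneg P)]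
    have hg1 : C ≤ (P - pm) / Real.sqrt (ϱm * (pm + (2 * cv + 1) * P)) :=
      le_trans hCle hg1a
    have hval : vp - vm = -Real.sqrt (2 * cv) * C := by
      rw [hCdef]; field_simp; ring
    rw [hval]
    unfold rtsF
    have key := mul_le_mul_of_nonneg_left (show C ≤
      (P - pm) / Real.sqrt (ϱm * (pm + (2 * cv + 1) * P)) +
      (P - pp) / Real.sqrt (ϱp * (pp + (2 * cv + 1) * P)) by linarith) hs.le
    linarith
  -- existence by IVT
  have hcont : ContinuousOn (rtsF cv ϱm ϱp pm pp) (Set.Icc m P) :=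
    (rtsF_contOn cv ϱm ϱp pm pp hcv hϱm hϱp hpm hpp).mono
      (fun x hx => le_trans hm0.le hx.1)
  have hsub := intermediate_value_Icc' hPm.le hcont
  obtain ⟨pM, hpMmem, hpMeq⟩ := hsub ⟨hfP, hfm.le⟩
  have hpM0 : 0 < pM := lt_of_lt_of_le hm0 hpMmem.1
  clear hpMmem hcont hfP hPm hP1 hBC hB hC0
  clear_value P B C
  clear hPdef hBdef hCdef hsub P B C
  have huniq : ∀ y : ℝ, (0 < y ∧ rtsF cv ϱm ϱp pm pp y = vp - vm) → y = pM := by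
    rintro y ⟨hy0, hyeq⟩
    rcases lt_trichotomy y pM with h | h | h
    · exfalso
      have := rtsF_anti cv ϱm ϱp pm pp hcv hϱm hϱp hpm hpp hy0.le h
      rw [hyeq, hpMeq] at this; exact lt_irrefl _ this
    · exact h
    · exfalso
      have := rtsF_anti cv ϱm ϱp pm pp hcv hϱm hϱp hpm hpp hpM0.le h
      rw [hyeq, hpMeq] at this; exact lt_irrefl _ this
  constructor
  · exact ⟨pM, ⟨hpM0, hpMeq⟩, huniq⟩
  · rintro q ⟨hq0, hqeq⟩
    have hqeq' : rtsF cv ϱm ϱp pm pp q = vp - vm := hqeq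
    have hmq : m < q := by
      rcases lt_trichotomy q m with h | h | h
      · exfalso
        have := rtsF_anti cv ϱm ϱp pm pp hcv hϱm hϱp hpm hpp hq0.le h
        rw [hqeq'] at this; linarith
      · exfalso; rw [h] at hqeq'; linarith
      · exact h
    have hq1 : pm < q := lt_of_le_of_lt (le_max_left _ _) hmq
    have hq2 : pp < q := lt_of_le_of_lt (le_max_right _ _) hmq
    refine ⟨hmq, ?_, ?_⟩
    · rw [lt_div_iff₀ (show (0:ℝ) < q + (2 * cv + 1) * pm by
        have := mul_pos (show (0:ℝ) < 2 * cv + 1 by linarith) hpm; linarith)]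
      nlinarith [mul_pos hϱm (mul_pos (show (0:ℝ) < 2 * cv by linarith) (sub_pos.mpr hq1))]
    · rw [lt_div_iff₀ (show (0:ℝ) < q + (2 * cv + 1) * pp by
        have := mul_pos (show (0:ℝ) < 2 * cv + 1 by linarith) hpp; linarith)]
      nlinarith [mul_pos hϱp (mul_pos (show (0:ℝ) < 2 * cv by linarith) (sub_pos.mpr hq2))]
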